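/- arXiv:2103.06829 — 3 statements merged into one kernel-verified Lean document; each statement's English description precedes it below -/
import Mathlib

section
/- For the two-qubit state |ψ⟩ = c00|00⟩ + c01(|01⟩+|10⟩) + √d_ε|11⟩ with real coefficients satisfying c00² + 2c01² = 1 − d_ε, and identical equatorial projective measurements M_a = (1/2)(I + (−1)^a (n_x X + √(1−n_x²) Z)) applied at both servers, the winning probability of the coherence equality game equals P_win = (1/8)[2 c00 √d_ε n_x² − 8 c01 √d_ε n_x √(1−n_x²) − (1+3d_ε)(n_x²−2) + 4 c01²(1+n_x²) + c00²(2+n_x²)]. -/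
open Matrix Kronecker

noncomputable section

/-- Vacuum projector |0⟩⟨0|. -/
def proj0 : Matrix (Fin 2) (Fin 2) ℂ := !![1, 0; 0, 0]

def pauliX : Matrix (Fin 2) (Fin 2) ℂ := !![0, 1; 1, 0]

def pauliZ : Matrix (Fin 2) (Fin 2) ℂ := !![1, 0; 0, -1]

/-- Partial trace over Bob's system (Alice's reduced state). -/
def trB (ρ : Matrix (Fin 2 × Fin 2) (Fin 2 × Fin 2) ℂ) : Matrix (Fin 2) (Fin 2) ℂ :=
  fun i j => ∑ k, ρ (i, k) (j, k)

/-- Partial trace over Alice's system (Bob's reduced state). -/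
def trA (ρ : Matrix (Fin 2 × Fin 2) (Fin 2 × Fin 2) ℂ) : Matrix (Fin 2) (Fin 2) ℂ :=
  fun i j => ∑ k, ρ (k, i) (k, j)

/-- State after the blocking stage on inputs x, y:
ρ₀₀ = ρ, ρ₀₁ = Tr_B(ρ)⊗|0⟩⟨0|, ρ₁₀ = |0⟩⟨0|⊗Tr_A(ρ), ρ₁₁ = |0⟩⟨0|⊗|0⟩⟨0|. -/
def blocked (ρ : Matrix (Fin 2 × Fin 2) (Fin 2 × Fin 2) ℂ) (x y : Fin 2) :
    Matrix (Fin 2 × Fin 2) (Fin 2 × Fin 2) ℂ :=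
  if x = 0 then (if y = 0 then ρ else trB ρ ⊗ₖ proj0)
  else (if y = 0 then proj0 ⊗ₖ trA ρ else proj0 ⊗ₖ proj0)

/-- Winning probability of the coherence equality game:
P_win = (1/4) Σ_{x,y} Σ_{a⊕b=x⊕y} Tr[ρ_xy (A_a ⊗ B_b)]. -/
def Pwin (ρ : Matrix (Fin 2 × Fin 2) (Fin 2 × Fin 2) ℂ)
    (A B : Fin 2 → Matrix (Fin 2) (Fin 2) ℂ) : ℝ :=
  (1/4) * ∑ x : Fin 2, ∑ y : Fin 2, ∑ a : Fin 2, ∑ b : Fin 2,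
    if a + b = x + y then (Matrix.trace (blocked ρ x y * (A a ⊗ₖ B b))).re else 0

set_option maxHeartbeats 8000000 in
/-- value of the winning probability for the state
|ψ⟩ = c00|00⟩ + c01(|01⟩+|10⟩) + √d_ε|11⟩ and equatorial measurements
M_a = (1/2)(I + (−1)^a (n_x X + √(1−n_x²) Z)) at both servers. -/
theorem stmt0 (c00 c01 dε nx : ℝ) (hdε : dε ∈ Set.Icc (0:ℝ) 1)
    (hnx : nx ∈ Set.Ioo (-1:ℝ) 1)
    (hnorm : c00^2 + 2*c01^2 = 1 - dε)
    (ψ : Fin 2 × Fin 2 → ℂ)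
    (hψ : ψ = fun p => if p = (0,0) then (c00:ℂ)
      else if p = (1,1) then (Real.sqrt dε : ℂ) else (c01:ℂ))
    (M : Fin 2 → Matrix (Fin 2) (Fin 2) ℂ)
    (hM : ∀ a, M a = (1/2 : ℂ) • (1 + ((-1)^(a:ℕ) : ℂ) •
        ((nx:ℂ) • pauliX + (Real.sqrt (1-nx^2) : ℂ) • pauliZ))) :
    Pwin (Matrix.vecMulVec ψ (star ψ)) M M =
      (1/8) * (2*c00*Real.sqrt dε*nx^2
        - 8*c01*Real.sqrt dε*nx*Real.sqrt (1-nx^2)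
        - (1+3*dε)*(nx^2-2) + 4*c01^2*(1+nx^2) + c00^2*(2+nx^2)) := by
  subst hψ
  set s := Real.sqrt dε with hsdef
  set t := Real.sqrt (1-nx^2) with htdef
  have hs : s^2 = dε := Real.sq_sqrt hdε.1
  have ht : t^2 = 1 - nx^2 := Real.sq_sqrt (by nlinarith [hnx.1, hnx.2])
  have htrB : ∀ (ρ : Matrix (Fin 2 × Fin 2) (Fin 2 × Fin 2) ℂ) i j,
      trB ρ i j = ρ (i,0) (j,0) + ρ (i,1) (j,1) := by
    intro ρ i j; simp [trB, Fin.sum_univ_two]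
  have htrA : ∀ (ρ : Matrix (Fin 2 × Fin 2) (Fin 2 × Fin 2) ℂ) i j,
      trA ρ i j = ρ (0,i) (0,j) + ρ (1,i) (1,j) := by
    intro ρ i j; simp [trA, Fin.sum_univ_two]
  simp only [htrB, htrA, Pwin, blocked, trB, trA, proj0, pauliX, pauliZ, hM,
    Matrix.trace, Matrix.diag, Matrix.mul_apply, Matrix.kroneckerMap_apply,
    Matrix.vecMulVec_apply, Fintype.sum_prod_type, Fin.sum_univ_two,
    Matrix.smul_apply, Matrix.add_apply, Matrix.one_apply, Matrix.of_apply,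
    Matrix.cons_val', Matrix.cons_val_zero, Matrix.cons_val_one,
    Matrix.head_cons, Matrix.head_fin_const, Matrix.empty_val',
    Matrix.cons_val_fin_one, Pi.star_apply, smul_eq_mul, reduceIte,
    Prod.mk.injEq, Fin.isValue, Fin.reduceEq, Fin.reduceAdd]
  norm_num [Complex.ext_iff, Complex.add_re, Complex.add_im, Complex.mul_re,
    Complex.mul_im, Complex.ofReal_re, Complex.ofReal_im, one_ne_zero,
    Fin.one_eq_zero_iff, Complex.star_def, Complex.conj_ofReal, htrB, htrA,
    Matrix.vecMulVec_apply, Pi.star_apply, Prod.mk.injEq, Fin.one_eq_zero_iff]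
  ring_nf
  linear_combination ((1:ℝ)/8 - c00^2/8 - c01^2/4 + 3*s^2/8) * ht + (3/8 + 3*(1-nx^2)/8) * hs
end
end

section
/- In the coherence equality game, if the source state ρ_AB is such that Alice's reduced state is the vacuum |0⟩⟨0| (Alice has no photon), then for any POVMs used by the servers, the winning probability satisfies P_win ≤ 1/2. -/
open Matrix Kronecker
open scoped ComplexOrder

noncomputable section

/-- One-photon projector |1⟩⟨1|. -/
def proj1 : Matrix (Fin 2) (Fin 2) ℂ := !![0, 0; 0, 1]

/-- A binary POVM: positive semidefinite elements summing to the identity. -/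
def IsPOVM (A : Fin 2 → Matrix (Fin 2) (Fin 2) ℂ) : Prop :=
  (∀ a, (A a).PosSemidef) ∧ A 0 + A 1 = 1

/-- if Alice's reduced state is the vacuum |0⟩⟨0| (no photon on
Alice's side), then for any POVMs used by the servers P_win ≤ 1/2. -/
theorem stmt6 (ρ : Matrix (Fin 2 × Fin 2) (Fin 2 × Fin 2) ℂ)
    (hρ : ρ.PosSemidef) (htr : ρ.trace = 1)
    (hvac : trB ρ = proj0)
    (A B : Fin 2 → Matrix (Fin 2) (Fin 2) ℂ)
    (hA : IsPOVM A) (hB : IsPOVM B) :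
    Pwin ρ A B ≤ 1/2 := by
  obtain ⟨hA1, hA2⟩ := hA
  obtain ⟨hB1, hB2⟩ := hB
  -- diagonal entries on Alice index 1 vanish
  have hd : ∀ k : Fin 2, star (Pi.single ((1 : Fin 2), k) (1:ℂ)) ⬝ᵥ ρ *ᵥ (Pi.single (1, k) 1)
      = ρ (1, k) (1, k) := by
    intro k
    simp [dotProduct, mulVec, Pi.single_apply, Fintype.sum_prod_type]
  have hnn : ∀ k : Fin 2, 0 ≤ ρ (1, k) (1, k) := by
    intro k
    have := hρ.dotProduct_mulVec_nonneg (Pi.single ((1 : Fin 2), k) (1:ℂ))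
    rwa [hd k] at this
  have hsum0 : ρ (1, 0) (1, 0) + ρ (1, 1) (1, 1) = 0 := by
    have := congrFun (congrFun hvac 1) 1
    simpa [trB, proj0, Fin.sum_univ_two] using this
  have hdiag : ∀ k : Fin 2, ρ (1, k) (1, k) = 0 := by
    intro k
    have h0 : ρ (1, 0) (1, 0) = 0 := le_antisymm
      (by
        have : ρ (1, 0) (1, 0) = -ρ (1, 1) (1, 1) := eq_neg_of_add_eq_zero_left hsum0
        rw [this]; exact neg_nonpos_of_nonneg (hnn 1)) (hnn 0)
    have h1 : ρ (1, 1) (1, 1) = 0 := by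
      have := hsum0; rw [h0, zero_add] at this; exact this
    fin_cases k <;> assumption
  have hcol : ∀ (p : Fin 2 × Fin 2) (k : Fin 2), ρ p (1, k) = 0 := by
    intro p k
    have hz : ρ *ᵥ (Pi.single ((1 : Fin 2), k) (1:ℂ)) = 0 := by
      rw [← hρ.dotProduct_mulVec_zero_iff, hd k]; exact hdiag k
    have := congrFun hz p
    simpa [mulVec, dotProduct, Pi.single_apply] using this
  have hrow : ∀ (k : Fin 2) (p : Fin 2 × Fin 2), ρ (1, k) p = 0 := by
    intro k p
    rw [← hρ.1.apply (1, k) p, hcol p k, star_zero]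
  have hfact : ρ = proj0 ⊗ₖ trA ρ := by
    ext p q
    obtain ⟨i, k⟩ := p
    obtain ⟨j, l⟩ := q
    fin_cases i <;> fin_cases j <;>
      simp [kroneckerMap_apply, proj0, trA, Fin.sum_univ_two, hrow, hcol]
  have htrσ : (trA ρ).trace = 1 := by
    rw [← htr]
    simp [Matrix.trace, trA, Fin.sum_univ_two, Fintype.sum_prod_type, Matrix.diag]
    ring
  have htrp : (proj0).trace = 1 := by simp [Matrix.trace, proj0, Fin.sum_univ_two]
  -- key POVM completeness identity
  have key : ∀ (M : Matrix (Fin 2 × Fin 2) (Fin 2 × Fin 2) ℂ),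
      (M * (A 0 ⊗ₖ B 0)).trace + (M * (A 0 ⊗ₖ B 1)).trace
        + (M * (A 1 ⊗ₖ B 0)).trace + (M * (A 1 ⊗ₖ B 1)).trace = M.trace := by
    intro M
    have hK : A 0 ⊗ₖ B 0 + A 0 ⊗ₖ B 1 + (A 1 ⊗ₖ B 0 + A 1 ⊗ₖ B 1)
        = (1 : Matrix (Fin 2 × Fin 2) (Fin 2 × Fin 2) ℂ) := by
      rw [← kronecker_add, ← kronecker_add, ← add_kronecker, hA2, hB2, one_kronecker_one]
    calc (M * (A 0 ⊗ₖ B 0)).trace + (M * (A 0 ⊗ₖ B 1)).trace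
        + (M * (A 1 ⊗ₖ B 0)).trace + (M * (A 1 ⊗ₖ B 1)).trace
        = (M * (A 0 ⊗ₖ B 0 + A 0 ⊗ₖ B 1 + (A 1 ⊗ₖ B 0 + A 1 ⊗ₖ B 1))).trace := by
          simp only [mul_add, trace_add]; ring
      _ = M.trace := by rw [hK, mul_one]
  have tr0 : (proj0 ⊗ₖ trA ρ).trace = 1 := by rw [trace_kronecker, htrp, htrσ, mul_one]
  have tr1 : (proj0 ⊗ₖ proj0).trace = 1 := by rw [trace_kronecker, htrp, mul_one]
  have E0 : ((proj0 ⊗ₖ trA ρ) * (A 0 ⊗ₖ B 0)).trace.re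
      + ((proj0 ⊗ₖ trA ρ) * (A 0 ⊗ₖ B 1)).trace.re
      + ((proj0 ⊗ₖ trA ρ) * (A 1 ⊗ₖ B 0)).trace.re
      + ((proj0 ⊗ₖ trA ρ) * (A 1 ⊗ₖ B 1)).trace.re = 1 := by
    have := congrArg Complex.re ((key (proj0 ⊗ₖ trA ρ)).trans tr0)
    simpa [Complex.add_re] using this
  have E1 : ((proj0 ⊗ₖ proj0) * (A 0 ⊗ₖ B 0)).trace.re
      + ((proj0 ⊗ₖ proj0) * (A 0 ⊗ₖ B 1)).trace.re
      + ((proj0 ⊗ₖ proj0) * (A 1 ⊗ₖ B 0)).trace.re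
      + ((proj0 ⊗ₖ proj0) * (A 1 ⊗ₖ B 1)).trace.re = 1 := by
    have := congrArg Complex.re ((key (proj0 ⊗ₖ proj0)).trans tr1)
    simpa [Complex.add_re] using this
  rw [Pwin]
  simp (config := { decide := true }) only [Fin.sum_univ_two, blocked, hvac, if_true, if_false,
    add_zero, zero_add]
  set s := trA ρ with hs
  rw [hfact]
  linarith [E0, E1]
end
end

section
/- Any product (separable coherent) pure two-qubit state σ⊗τ, used in the coherence equality game, together with arbitrary server POVMs, cannot win the game with probability exceeding the optimum achieved by the family (√(1−d_ε)|0⟩+√d_ε|1⟩)⊗|1⟩ under the constraint ⟨11|(σ⊗τ)|11⟩ ≤ d_ε; in particular for d_ε = 0 every product state yields P_win ≤ 1/2 unless it equals a non-coherent basis state achieving the classical bound. -/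
open Matrix Kronecker
open scoped ComplexOrder

noncomputable section

/-- The family of separable coherent states (√(1−d_ε)|0⟩+√d_ε|1⟩)⊗|1⟩. -/
def sepFamily (dε : ℝ) : Fin 2 × Fin 2 → ℂ :=
  fun p => (if p.1 = 0 then (Real.sqrt (1 - dε) : ℂ) else (Real.sqrt dε : ℂ)) *
    (if p.2 = 1 then 1 else 0)

/-!
For a product state σ ⊗ τ and binary POVMs {A₀, A₁}, {B₀, B₁}, the winning probability
factorises as `1/2 + c_σ(A₀) c_τ(B₀) / 2`, where `c_σ(A) = tr((σ - |0⟩⟨0|) A)` compares how the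
effect `A` responds to `σ` and to the vacuum left by the blocking maps. For a pure state
`σ = |u⟩⟨u|` the operator `σ - |0⟩⟨0|` has eigenvalues `±|u₁|`, so `|c_σ(A)| ≤ |u₁|` for every
effect `0 ≤ A ≤ 1`. Hence `P_win ≤ 1/2 + |u₁| |w₁| / 2 ≤ 1/2 + √d_ε / 2`, the last step being the
constraint on the `|11⟩` population. The family state attains this value: there
`σ - |0⟩⟨0| = √d_ε • Y` for a real reflection `Y`, and measuring the sign of `Y` gives
`c_σ = √d_ε`.
-/

lemma Matrix.PosSemidef.normSq_apply_zero_one_le {M : Matrix (Fin 2) (Fin 2) ℂ}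
    (hM : M.PosSemidef) : Complex.normSq (M 0 1) ≤ (M 0 0).re * (M 1 1).re := by
  have h10 : M 1 0 = star (M 0 1) := (hM.isHermitian.apply 1 0).symm
  have h00 := Complex.nonneg_iff.mp (hM.diag_nonneg (i := 0))
  have h11 := Complex.nonneg_iff.mp (hM.diag_nonneg (i := 1))
  have hdet := (Complex.nonneg_iff.mp hM.det_nonneg).1
  rw [Matrix.det_fin_two, h10, Complex.star_def, Complex.mul_conj] at hdet
  simp only [Complex.sub_re, Complex.mul_re, Complex.ofReal_re, ← h00.2, ← h11.2] at hdet
  linarith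

lemma re_apply_le_one_of_posSemidef_one_sub {n : Type*} [Fintype n] [DecidableEq n]
    {A : Matrix n n ℂ} (hA : (1 - A).PosSemidef) (i : n) : (A i i).re ≤ 1 := by
  simpa using (Complex.nonneg_iff.mp (hA.diag_nonneg (i := i))).1

lemma sq_sub_add_four_mul_le_one {a b t : ℝ} (ha₀ : 0 ≤ a) (ha₁ : a ≤ 1) (hb₀ : 0 ≤ b)
    (hb₁ : b ≤ 1) (ht : 0 ≤ t) (h : t ≤ a * b) (h' : t ≤ (1 - a) * (1 - b)) :
    (b - a) ^ 2 + 4 * t ≤ 1 := by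
  have hprod : t * t ≤ (a * (1 - a)) * (b * (1 - b)) := by
    nlinarith [mul_le_mul h h' ht (ht.trans h)]
  have hsum : 2 * t ≤ a * (1 - a) + b * (1 - b) := by
    nlinarith [sq_nonneg (a * (1 - a) - b * (1 - b)), mul_nonneg ha₀ (sub_nonneg.2 ha₁),
      mul_nonneg hb₀ (sub_nonneg.2 hb₁)]
  nlinarith [sq_nonneg (a + b - 1)]

/-- The left-hand side is the squared gap between the eigenvalues of `A`, which both lie
in `[0, 1]`. -/
lemma Matrix.PosSemidef.sq_re_sub_add_four_mul_normSq_le_one {A : Matrix (Fin 2) (Fin 2) ℂ}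
    (hA : A.PosSemidef) (hA' : (1 - A).PosSemidef) :
    ((A 1 1).re - (A 0 0).re) ^ 2 + 4 * Complex.normSq (A 0 1) ≤ 1 := by
  have h' := hA'.normSq_apply_zero_one_le
  simp only [Matrix.sub_apply, Matrix.one_apply_eq, Matrix.one_apply_ne zero_ne_one, zero_sub,
    Complex.normSq_neg, Complex.sub_re, Complex.one_re] at h'
  exact sq_sub_add_four_mul_le_one (Complex.nonneg_iff.mp (hA.diag_nonneg (i := 0))).1
    (re_apply_le_one_of_posSemidef_one_sub hA' 0)
    (Complex.nonneg_iff.mp (hA.diag_nonneg (i := 1))).1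
    (re_apply_le_one_of_posSemidef_one_sub hA' 1) (Complex.normSq_nonneg _)
    hA.normSq_apply_zero_one_le h'

lemma Matrix.IsHermitian.im_trace_mul_eq_zero {n : Type*} [Fintype n] {A B : Matrix n n ℂ}
    (hA : A.IsHermitian) (hB : B.IsHermitian) : (A * B).trace.im = 0 := by
  have : star (A * B).trace = (A * B).trace := by
    rw [← Matrix.trace_conjTranspose, Matrix.conjTranspose_mul, hA.eq, hB.eq, Matrix.trace_mul_comm]
  exact Complex.conj_eq_iff_im.mp this

lemma isHermitian_proj0 : proj0.IsHermitian := by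
  ext i j
  fin_cases i <;> fin_cases j <;> simp [proj0]

lemma trace_proj0 : proj0.trace = 1 := by
  simp [proj0, Matrix.trace_fin_two]

def contrast (σ A : Matrix (Fin 2) (Fin 2) ℂ) : ℂ := ((σ - proj0) * A).trace

lemma im_contrast_eq_zero {σ A : Matrix (Fin 2) (Fin 2) ℂ} (hσ : σ.IsHermitian)
    (hA : A.IsHermitian) : (contrast σ A).im = 0 :=
  (hσ.sub isHermitian_proj0).im_trace_mul_eq_zero hA

lemma re_contrast_vecMulVec {u : Fin 2 → ℂ} (hu : ∑ i, Complex.normSq (u i) = 1)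
    {A : Matrix (Fin 2) (Fin 2) ℂ} (hA : A.IsHermitian) :
    (contrast (vecMulVec u (star u)) A).re =
      Complex.normSq (u 1) * ((A 1 1).re - (A 0 0).re) + 2 * (u 1 * star (u 0) * A 0 1).re := by
  have h10 : A 1 0 = star (A 0 1) := (hA.apply 1 0).symm
  rw [Fin.sum_univ_two, Complex.normSq_apply, Complex.normSq_apply] at hu
  simp only [contrast, Matrix.trace_fin_two, Matrix.mul_apply, Fin.sum_univ_two, Matrix.sub_apply,
    vecMulVec_apply, proj0, h10, Pi.star_apply, RCLike.star_def, of_apply, cons_val',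
    cons_val_zero, cons_val_one, cons_val_fin_one, sub_zero, Complex.add_re, Complex.mul_re,
    Complex.sub_re, Complex.conj_re, Complex.conj_im, mul_neg, sub_neg_eq_add, Complex.one_re,
    Complex.sub_im, Complex.mul_im, Complex.one_im, Complex.normSq_apply]
  linear_combination (A 0 0).re * hu

lemma abs_re_contrast_vecMulVec_le {u : Fin 2 → ℂ} (hu : ∑ i, Complex.normSq (u i) = 1)
    {A : Matrix (Fin 2) (Fin 2) ℂ} (hA : A.PosSemidef) (hA' : (1 - A).PosSemidef) :
    |(contrast (vecMulVec u (star u)) A).re| ≤ ‖u 1‖ := by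
  rw [re_contrast_vecMulVec hu hA.isHermitian, ← Complex.sq_norm]
  set d := (A 1 1).re - (A 0 0).re
  have hunit : ‖u 1‖ ^ 2 + ‖u 0‖ ^ 2 = 1 := by
    simpa [Fin.sum_univ_two, Complex.sq_norm, add_comm] using hu
  have hspread : d ^ 2 + (2 * ‖A 0 1‖) ^ 2 ≤ 1 := by
    have := hA.sq_re_sub_add_four_mul_normSq_le_one hA'
    rw [← Complex.sq_norm] at this
    linarith
  have hcross : |2 * (u 1 * star (u 0) * A 0 1).re| ≤ ‖u 1‖ * (‖u 0‖ * (2 * ‖A 0 1‖)) := by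
    rw [abs_mul, abs_two]
    calc 2 * |(u 1 * star (u 0) * A 0 1).re| ≤ 2 * ‖u 1 * star (u 0) * A 0 1‖ := by
          gcongr; exact Complex.abs_re_le_norm _
      _ = _ := by rw [norm_mul, norm_mul, norm_star]; ring
  -- AM-GM, since both `(‖u 1‖, ‖u 0‖)` and `(|d|, 2 ‖A 0 1‖)` lie in the unit disc
  have hcs : ‖u 1‖ * |d| + ‖u 0‖ * (2 * ‖A 0 1‖) ≤ 1 := by
    nlinarith [sq_nonneg (‖u 1‖ - |d|), sq_nonneg (‖u 0‖ - 2 * ‖A 0 1‖), sq_abs d]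
  calc |‖u 1‖ ^ 2 * d + 2 * (u 1 * star (u 0) * A 0 1).re|
      ≤ ‖u 1‖ ^ 2 * |d| + ‖u 1‖ * (‖u 0‖ * (2 * ‖A 0 1‖)) := by
        refine (abs_add_le _ _).trans (add_le_add ?_ hcross)
        rw [abs_mul, abs_of_nonneg (sq_nonneg _)]
    _ = ‖u 1‖ * (‖u 1‖ * |d| + ‖u 0‖ * (2 * ‖A 0 1‖)) := by ring
    _ ≤ ‖u 1‖ := mul_le_of_le_one_right (norm_nonneg _) hcs

lemma trB_kronecker (M N : Matrix (Fin 2) (Fin 2) ℂ) : trB (M ⊗ₖ N) = N.trace • M := by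
  ext i j
  simp only [trB, kroneckerMap_apply, ← Finset.mul_sum, Matrix.smul_apply, smul_eq_mul]
  rw [mul_comm, Matrix.trace]
  rfl

lemma trA_kronecker (M N : Matrix (Fin 2) (Fin 2) ℂ) : trA (M ⊗ₖ N) = M.trace • N := by
  ext i j
  simp only [trA, kroneckerMap_apply, ← Finset.sum_mul, Matrix.smul_apply, smul_eq_mul]
  rfl

lemma blocked_kronecker {σ τ : Matrix (Fin 2) (Fin 2) ℂ} (hσ : σ.trace = 1) (hτ : τ.trace = 1)
    (x y : Fin 2) : blocked (σ ⊗ₖ τ) x y = ![σ, proj0] x ⊗ₖ ![τ, proj0] y := by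
  fin_cases x <;> fin_cases y <;> simp [blocked, trB_kronecker, trA_kronecker, hσ, hτ]

lemma Pwin_kronecker {σ τ : Matrix (Fin 2) (Fin 2) ℂ} (hσ : σ.trace = 1) (hτ : τ.trace = 1)
    {A B : Fin 2 → Matrix (Fin 2) (Fin 2) ℂ} (hA : A 0 + A 1 = 1) (hB : B 0 + B 1 = 1) :
    Pwin (σ ⊗ₖ τ) A B = 1 / 2 + (contrast σ (A 0) * contrast τ (B 0)).re / 2 := by
  have hA1 : A 1 = 1 - A 0 := eq_sub_of_add_eq' hA
  have hB1 : B 1 = 1 - B 0 := eq_sub_of_add_eq' hB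
  simp only [Pwin, blocked_kronecker hσ hτ, ← mul_kronecker_mul, trace_kronecker,
    Fin.sum_univ_two, hA1, hB1, contrast]
  simp only [one_div, ↓reduceIte, Fin.isValue, cons_val_zero, cons_val_one, cons_val_fin_one,
    Fin.reduceAdd, zero_add, add_zero, one_ne_zero, zero_ne_one, Matrix.mul_sub, Matrix.sub_mul,
    mul_one, trace_sub, hσ, hτ, trace_proj0, Complex.mul_re, Complex.sub_re, Complex.one_re,
    Complex.sub_im, Complex.one_im, zero_sub, mul_neg, neg_mul, neg_neg, sub_neg_eq_add]
  ring

lemma vecMulVec_prod_eq_kronecker {m n : Type*} (u : m → ℂ) (w : n → ℂ) :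
    vecMulVec (fun p : m × n => u p.1 * w p.2) (star fun p : m × n => u p.1 * w p.2) =
      vecMulVec u (star u) ⊗ₖ vecMulVec w (star w) := by
  ext ⟨i, k⟩ ⟨j, l⟩
  simp only [vecMulVec_apply, kroneckerMap_apply, Pi.star_apply, star_mul']
  ring

lemma re_vecMulVec_prod_apply_self {m n : Type*} (u : m → ℂ) (w : n → ℂ) (i : m) (j : n) :
    (vecMulVec (fun p : m × n => u p.1 * w p.2) (star fun p : m × n => u p.1 * w p.2)
      (i, j) (i, j)).re = (‖u i‖ * ‖w j‖) ^ 2 := by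
  rw [vecMulVec_apply, Pi.star_apply, Complex.star_def, Complex.mul_conj, Complex.ofReal_re,
    Complex.normSq_mul, ← Complex.sq_norm, ← Complex.sq_norm, mul_pow]

lemma trace_vecMulVec_self_star {n : Type*} [Fintype n] {u : n → ℂ}
    (hu : ∑ i, Complex.normSq (u i) = 1) : (vecMulVec u (star u)).trace = 1 := by
  simp only [trace_vecMulVec, dotProduct, Pi.star_apply, Complex.star_def, Complex.mul_conj]
  exact_mod_cast hu

lemma Pwin_vecMulVec_prod_le {u w : Fin 2 → ℂ} (hu : ∑ i, Complex.normSq (u i) = 1)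
    (hw : ∑ i, Complex.normSq (w i) = 1) {A B : Fin 2 → Matrix (Fin 2) (Fin 2) ℂ}
    (hA : IsPOVM A) (hB : IsPOVM B) :
    Pwin (vecMulVec (fun p : Fin 2 × Fin 2 => u p.1 * w p.2)
      (star fun p : Fin 2 × Fin 2 => u p.1 * w p.2)) A B ≤ 1 / 2 + ‖u 1‖ * ‖w 1‖ / 2 := by
  have hA1 : (1 - A 0).PosSemidef := eq_sub_of_add_eq' hA.2 ▸ hA.1 1
  have hB1 : (1 - B 0).PosSemidef := eq_sub_of_add_eq' hB.2 ▸ hB.1 1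
  rw [vecMulVec_prod_eq_kronecker, Pwin_kronecker (trace_vecMulVec_self_star hu)
    (trace_vecMulVec_self_star hw) hA.2 hB.2, Complex.mul_re,
    im_contrast_eq_zero (posSemidef_vecMulVec_self_star u).isHermitian (hA.1 0).isHermitian,
    zero_mul, sub_zero]
  gcongr 1 / 2 + ?_ / 2
  calc _ ≤ |(contrast (vecMulVec u (star u)) (A 0)).re| *
        |(contrast (vecMulVec w (star w)) (B 0)).re| :=
          (le_abs_self _).trans_eq (abs_mul _ _)
    _ ≤ ‖u 1‖ * ‖w 1‖ := mul_le_mul (abs_re_contrast_vecMulVec_le hu (hA.1 0) hA1)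
        (abs_re_contrast_vecMulVec_le hw (hB.1 0) hB1) (abs_nonneg _) (norm_nonneg _)

lemma Matrix.IsHermitian.posSemidef_of_mul_self_eq {n : Type*} [Fintype n] {P : Matrix n n ℂ}
    (hP : P.IsHermitian) (h : P * P = P) : P.PosSemidef := by
  have := posSemidef_conjTranspose_mul_self P
  rwa [hP.eq, h] at this

lemma posSemidef_half_smul_one_add {n : Type*} [Fintype n] [DecidableEq n] {Y : Matrix n n ℂ}
    (hY : Y.IsHermitian) (hY2 : Y * Y = 1) : ((2⁻¹ : ℝ) • (1 + Y)).PosSemidef := by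
  refine ((isHermitian_one.add hY).smul (IsSelfAdjoint.all _)).posSemidef_of_mul_self_eq ?_
  have hsq : (1 + Y) * (1 + Y) = (2 : ℝ) • (1 + Y) := by
    rw [add_mul, mul_add, mul_add, one_mul, one_mul, mul_one, hY2]
    module
  rw [smul_mul_smul, hsq, smul_smul]
  norm_num

def reflectionPOVM (Y : Matrix (Fin 2) (Fin 2) ℂ) : Fin 2 → Matrix (Fin 2) (Fin 2) ℂ :=
  ![(2⁻¹ : ℝ) • (1 + Y), (2⁻¹ : ℝ) • (1 - Y)]

lemma isPOVM_reflectionPOVM {Y : Matrix (Fin 2) (Fin 2) ℂ} (hY : Y.IsHermitian)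
    (hY2 : Y * Y = 1) : IsPOVM (reflectionPOVM Y) := by
  refine ⟨fun a => ?_, ?_⟩
  · fin_cases a
    · exact posSemidef_half_smul_one_add hY hY2
    · simpa [reflectionPOVM, sub_eq_add_neg] using
        posSemidef_half_smul_one_add hY.neg (by rw [neg_mul_neg, hY2])
  · simp only [reflectionPOVM, Matrix.cons_val_zero, Matrix.cons_val_one]
    module

lemma contrast_reflectionPOVM_zero {σ Y : Matrix (Fin 2) (Fin 2) ℂ} {c : ℂ}
    (hσ : σ - proj0 = c • Y) (hY0 : Y.trace = 0) (hY2 : Y * Y = 1) :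
    contrast σ (reflectionPOVM Y 0) = c := by
  rw [contrast, hσ, reflectionPOVM, Matrix.cons_val_zero, Matrix.smul_mul, Matrix.mul_smul,
    mul_add, mul_one, hY2, trace_smul, trace_smul, trace_add, hY0, trace_one]
  simp

def reflection (a b : ℝ) : Matrix (Fin 2) (Fin 2) ℂ := !![-(a : ℂ), b; b, a]

lemma isHermitian_reflection (a b : ℝ) : (reflection a b).IsHermitian := by
  ext i j
  fin_cases i <;> fin_cases j <;> simp [reflection]

lemma trace_reflection (a b : ℝ) : (reflection a b).trace = 0 := by
  simp [reflection, Matrix.trace_fin_two]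

lemma reflection_mul_self {a b : ℝ} (h : a ^ 2 + b ^ 2 = 1) :
    reflection a b * reflection a b = 1 := by
  have h' : (a : ℂ) ^ 2 + (b : ℂ) ^ 2 = 1 := by exact_mod_cast h
  rw [reflection, mul_fin_two, one_fin_two]
  congrm !![?_, ?_; ?_, ?_]
  · linear_combination h'
  · ring
  · ring
  · linear_combination h'

lemma vecMulVec_sub_proj0 {a b : ℝ} (h : a ^ 2 + b ^ 2 = 1) :
    vecMulVec ![(b : ℂ), a] (star ![(b : ℂ), a]) - proj0 = (a : ℂ) • reflection a b := by
  have h' : (a : ℂ) ^ 2 + (b : ℂ) ^ 2 = 1 := by exact_mod_cast h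
  ext i j
  fin_cases i <;> fin_cases j <;>
    simp only [Fin.zero_eta, Fin.mk_one, Matrix.sub_apply, Matrix.smul_apply, vecMulVec_apply,
      proj0, reflection, of_apply, Pi.star_apply, Complex.star_def, Complex.conj_ofReal, cons_val',
      cons_val_zero, cons_val_one, cons_val_fin_one, smul_eq_mul]
  · linear_combination h'
  all_goals ring

lemma sum_normSq_of_sq_add_sq {a b : ℝ} (h : a ^ 2 + b ^ 2 = 1) :
    ∑ i, Complex.normSq (![(b : ℂ), a] i) = 1 := by
  simp only [Fin.sum_univ_two, Matrix.cons_val_zero, Matrix.cons_val_one, Complex.normSq_ofReal]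
  linear_combination h

lemma Pwin_reflectionPOVM {a b a' b' : ℝ} (h : a ^ 2 + b ^ 2 = 1) (h' : a' ^ 2 + b' ^ 2 = 1) :
    Pwin (vecMulVec (fun p : Fin 2 × Fin 2 => ![(b : ℂ), a] p.1 * ![(b' : ℂ), a'] p.2)
        (star fun p : Fin 2 × Fin 2 => ![(b : ℂ), a] p.1 * ![(b' : ℂ), a'] p.2))
      (reflectionPOVM (reflection a b)) (reflectionPOVM (reflection a' b')) =
        1 / 2 + a * a' / 2 := by
  rw [vecMulVec_prod_eq_kronecker, Pwin_kronecker
    (trace_vecMulVec_self_star (sum_normSq_of_sq_add_sq h))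
    (trace_vecMulVec_self_star (sum_normSq_of_sq_add_sq h'))
    (isPOVM_reflectionPOVM (isHermitian_reflection a b) (reflection_mul_self h)).2
    (isPOVM_reflectionPOVM (isHermitian_reflection a' b') (reflection_mul_self h')).2,
    contrast_reflectionPOVM_zero (vecMulVec_sub_proj0 h) (trace_reflection a b)
      (reflection_mul_self h),
    contrast_reflectionPOVM_zero (vecMulVec_sub_proj0 h') (trace_reflection a' b')
      (reflection_mul_self h'), ← Complex.ofReal_mul, Complex.ofReal_re]

lemma sepFamily_eq (dε : ℝ) :
    sepFamily dε = fun p : Fin 2 × Fin 2 =>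
      ![((√(1 - dε) : ℝ) : ℂ), ((√dε : ℝ) : ℂ)] p.1 * ![((0 : ℝ) : ℂ), ((1 : ℝ) : ℂ)] p.2 := by
  ext ⟨i, j⟩
  fin_cases i <;> fin_cases j <;> simp [sepFamily]

lemma isGreatest_Pwin_sepFamily {dε : ℝ} (hdε : dε ∈ Set.Icc (0 : ℝ) 1) :
    IsGreatest {p : ℝ | ∃ A' B', IsPOVM A' ∧ IsPOVM B' ∧
        p = Pwin (vecMulVec (sepFamily dε) (star (sepFamily dε))) A' B'} (1 / 2 + √dε / 2) := by
  have h : √dε ^ 2 + √(1 - dε) ^ 2 = 1 := by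
    rw [Real.sq_sqrt hdε.1, Real.sq_sqrt (sub_nonneg.2 hdε.2)]
    ring
  have h' : (1 : ℝ) ^ 2 + 0 ^ 2 = 1 := by norm_num
  rw [sepFamily_eq]
  refine ⟨⟨_, _, isPOVM_reflectionPOVM (isHermitian_reflection _ _) (reflection_mul_self h),
    isPOVM_reflectionPOVM (isHermitian_reflection _ _) (reflection_mul_self h'),
    by rw [Pwin_reflectionPOVM h h', mul_one]⟩, ?_⟩
  rintro p ⟨A, B, hA, hB, rfl⟩
  refine (Pwin_vecMulVec_prod_le (sum_normSq_of_sq_add_sq h) (sum_normSq_of_sq_add_sq h')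
    hA hB).trans_eq ?_
  simp

/-- a product pure state σ⊗τ with ⟨11|σ⊗τ|11⟩ ≤ d_ε cannot win
the coherence equality game better than the optimum achieved by the family
(√(1−d_ε)|0⟩+√d_ε|1⟩)⊗|1⟩; in particular for d_ε = 0 every product state
yields P_win ≤ 1/2 unless it is a non-coherent basis state. -/
theorem stmt7 (dε : ℝ) (hdε : dε ∈ Set.Icc (0:ℝ) 1)
    (u w : Fin 2 → ℂ) (hu : ∑ i, Complex.normSq (u i) = 1)
    (hw : ∑ i, Complex.normSq (w i) = 1)
    (ψ : Fin 2 × Fin 2 → ℂ) (hψ : ψ = fun p => u p.1 * w p.2)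
    (hcon : ((Matrix.vecMulVec ψ (star ψ)) (1,1) (1,1)).re ≤ dε)
    (A B : Fin 2 → Matrix (Fin 2) (Fin 2) ℂ) (hA : IsPOVM A) (hB : IsPOVM B) :
    Pwin (Matrix.vecMulVec ψ (star ψ)) A B ≤
      sSup {p : ℝ | ∃ A' B', IsPOVM A' ∧ IsPOVM B' ∧
        p = Pwin (Matrix.vecMulVec (sepFamily dε) (star (sepFamily dε))) A' B'} ∧
    (dε = 0 →
      (Pwin (Matrix.vecMulVec ψ (star ψ)) A B ≤ 1/2 ∨
        ∃ i j : Fin 2, Matrix.vecMulVec ψ (star ψ) =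
          Matrix.single (i,j) (i,j) 1)) := by
  subst hψ
  have hpop : ‖u 1‖ * ‖w 1‖ ≤ √dε :=
    Real.le_sqrt_of_sq_le (re_vecMulVec_prod_apply_self u w 1 1 ▸ hcon)
  have hwin := Pwin_vecMulVec_prod_le hu hw hA hB
  refine ⟨?_, fun hd => Or.inl ?_⟩
  · rw [(isGreatest_Pwin_sepFamily hdε).csSup_eq]
    linarith
  · rw [hd, Real.sqrt_zero] at hpop
    linarith
end
end
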